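/- On CFK^∞(4_1), the F2[U,U^{-1}]-linear map ι defined on generators by ι(a) = a + x, ι(b) = U^{-1}c, ι(c) = Ub, ι(e) = e, ι(x) = e + x is a chain map (ι∂ = ∂ι) that preserves the homological grading M, and every term of ι(y) has planar coordinates coordinatewise ≤ the transpose (j,i) of the planar coordinates (i,j) of y (ι is skew-filtered). Moreover ι^2 = σ, where σ = Id + U^{-1}ΦΨ is the Sarkar map of this complex, which here satisfies σ(a) = a + e and σ(b) = b, σ(c) = c, σ(e) = e, σ(x) = x. In particular ι^4 = Id. -/

import Mathlib

/-!
A linear map out of the free module is determined by its values on the generators a, b, c, e, x,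
so ∂² = 0, ι∂ = ∂ι and ι² = σ are finite computations over F2[U,U⁻¹], where y + y = 0. The
grading and the filtration are spans of monomials U^k·g, and multiplication by U^k shifts both
uniformly; hence it suffices that ι sends each generator to an element of the right degree and
level. Finally σ(a) = a + e with σ(e) = e, so σ is an involution and ι⁴ = σ² = Id.
-/

open LaurentPolynomial

noncomputable section

/-- F2[U, U⁻¹] -/
abbrev L2 : Type := LaurentPolynomial (ZMod 2)

/-- the variable U = T 1 -/
def UL : L2 := T 1

/-- the i-th free generator -/
def gen {n : ℕ} (i : Fin n) : Fin n → L2 := Pi.single i 1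

/-- the F2[U,U⁻¹]-linear map sending the i-th generator to `v i` -/
def mkL {n : ℕ} (v : Fin n → (Fin n → L2)) : (Fin n → L2) →ₗ[L2] (Fin n → L2) :=
  (Pi.basisFun L2 (Fin n)).constr ℕ v

/-- `x` is homogeneous of homological degree `r`: it is an F2-combination of
elements U^k·(i-th generator) with M i - 2k = r. -/
def HomogL {n : ℕ} (M : Fin n → ℤ) (r : ℤ) (x : Fin n → L2) : Prop :=
  x ∈ Submodule.span (ZMod 2)
    {v : Fin n → L2 | ∃ (i : Fin n) (k : ℤ), M i - 2 * k = r ∧ v = (T k : L2) • gen i}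

/-- every term of `x` has planar coordinates coordinatewise ≤ `st`, where the
i-th generator sits at `P i` and U lowers both coordinates by 1. -/
def BelowL {n : ℕ} (P : Fin n → ℤ × ℤ) (st : ℤ × ℤ) (x : Fin n → L2) : Prop :=
  x ∈ Submodule.span (ZMod 2)
    {v : Fin n → L2 | ∃ (i : Fin n) (k : ℤ),
      (P i).1 - k ≤ st.1 ∧ (P i).2 - k ≤ st.2 ∧ v = (T k : L2) • gen i}

/- generators: a = 0, b = 1, c = 2, e = 3, x = 4 -/

/-- the differential of CFK^∞(4_1) -/
def d : (Fin 5 → L2) →ₗ[L2] (Fin 5 → L2) :=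
  mkL ![UL • gen 1 + gen 2, gen 3, UL • gen 3, 0, 0]

/-- homological gradings -/
def M : Fin 5 → ℤ := ![0, 1, -1, 0, 0]

/-- planar bigradings -/
def P : Fin 5 → ℤ × ℤ := ![(0, 0), (0, 1), (0, -1), (0, 0), (0, 0)]

/-- the map ι -/
def iota : (Fin 5 → L2) →ₗ[L2] (Fin 5 → L2) :=
  mkL ![gen 0 + gen 4, (T (-1) : L2) • gen 2, UL • gen 1, gen 3, gen 3 + gen 4]

/-- Φ = Σ_{p odd} ∂_{p0} : the components of ∂ lowering the first planar
coordinate by an odd amount and preserving the second -/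
def Phi : (Fin 5 → L2) →ₗ[L2] (Fin 5 → L2) :=
  mkL ![UL • gen 1, 0, UL • gen 3, 0, 0]

/-- Ψ = Σ_{q odd} ∂_{0q} : the components of ∂ preserving the first planar
coordinate and lowering the second by an odd amount -/
def Psi : (Fin 5 → L2) →ₗ[L2] (Fin 5 → L2) :=
  mkL ![gen 2, gen 3, 0, 0, 0]

/-- the Sarkar map σ = Id + U⁻¹(Φ ∘ Ψ) -/
def sigma : (Fin 5 → L2) →ₗ[L2] (Fin 5 → L2) :=
  LinearMap.id + (T (-1) : L2) • (Phi ∘ₗ Psi)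

lemma L2.two_eq_zero : (2 : L2) = 0 := by
  rw [show (2 : L2) = C 2 from (map_ofNat C 2).symm, show (2 : ZMod 2) = 0 from rfl, map_zero]

section FreeModule

variable {n : ℕ}

lemma L2.add_self_eq_zero (y : Fin n → L2) : y + y = 0 := by
  rw [← two_smul L2 y, L2.two_eq_zero, zero_smul]

lemma L2.add_add_cancel_left (y z : Fin n → L2) : y + (y + z) = z := by
  rw [← add_assoc, L2.add_self_eq_zero, zero_add]

lemma basisFun_eq_gen (i : Fin n) : Pi.basisFun L2 (Fin n) i = gen i := by
  rw [Pi.basisFun_apply, gen]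

@[simp]
lemma mkL_gen (v : Fin n → Fin n → L2) (i : Fin n) : mkL v (gen i) = v i := by
  rw [mkL, ← basisFun_eq_gen, Module.Basis.constr_basis]

lemma linearMap_ext_gen {f g : (Fin n → L2) →ₗ[L2] (Fin n → L2)}
    (h : ∀ i, f (gen i) = g (gen i)) : f = g :=
  (Pi.basisFun L2 (Fin n)).ext fun i => by rw [basisFun_eq_gen]; exact h i

lemma T_smul_T_smul (k k' : ℤ) (y : Fin n → L2) :
    (T k : L2) • (T k' : L2) • y = (T (k + k') : L2) • y := by
  rw [smul_smul, ← T_add]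

@[simp]
lemma UL_smul_T_neg_one_smul (y : Fin n → L2) : UL • (T (-1) : L2) • y = y := by
  rw [UL, T_smul_T_smul]; norm_num

@[simp]
lemma T_neg_one_smul_UL_smul (y : Fin n → L2) : (T (-1) : L2) • UL • y = y := by
  rw [UL, T_smul_T_smul]; norm_num

end FreeModule

namespace HomogL

variable {n : ℕ} {M : Fin n → ℤ} {r : ℤ}

lemma T_smul_gen {i : Fin n} {k : ℤ} (h : M i - 2 * k = r) : HomogL M r ((T k : L2) • gen i) :=
  Submodule.subset_span ⟨i, k, h, rfl⟩

lemma gen {i : Fin n} (h : M i = r) : HomogL M r (gen i) := by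
  rw [← one_smul L2 (_root_.gen i), ← T_zero]
  exact T_smul_gen (by omega)

lemma add {x y : Fin n → L2} (hx : HomogL M r x) (hy : HomogL M r y) : HomogL M r (x + y) :=
  Submodule.add_mem _ hx hy

lemma T_smul {x : Fin n → L2} (hx : HomogL M r x) (k : ℤ) :
    HomogL M (r - 2 * k) ((T k : L2) • x) := by
  induction hx using Submodule.span_induction with
  | mem v hv =>
    obtain ⟨i, k', hk', rfl⟩ := hv
    rw [T_smul_T_smul]
    exact T_smul_gen (by omega)
  | zero => rw [smul_zero]; exact Submodule.zero_mem _
  | add y z _ _ hy hz => rw [smul_add]; exact hy.add hz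
  | smul c y _ hy => rw [smul_comm]; exact Submodule.smul_mem _ c hy

lemma map_of_gen (f : (Fin n → L2) →ₗ[L2] (Fin n → L2)) (hf : ∀ i, HomogL M (M i) (f (_root_.gen i)))
    {x : Fin n → L2} (hx : HomogL M r x) : HomogL M r (f x) := by
  induction hx using Submodule.span_induction with
  | mem v hv =>
    obtain ⟨i, k, hk, rfl⟩ := hv
    rw [map_smul, ← hk]
    exact (hf i).T_smul k
  | zero => rw [map_zero]; exact Submodule.zero_mem _
  | add y z _ _ hy hz => rw [map_add]; exact hy.add hz
  | smul c y _ hy => rw [LinearMap.map_smul_of_tower]; exact Submodule.smul_mem _ c hy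

end HomogL

namespace BelowL

variable {n : ℕ} {P : Fin n → ℤ × ℤ} {st : ℤ × ℤ}

lemma T_smul_gen {i : Fin n} {k : ℤ} (h₁ : (P i).1 - k ≤ st.1) (h₂ : (P i).2 - k ≤ st.2) :
    BelowL P st ((T k : L2) • gen i) :=
  Submodule.subset_span ⟨i, k, h₁, h₂, rfl⟩

lemma gen {i : Fin n} (h₁ : (P i).1 ≤ st.1) (h₂ : (P i).2 ≤ st.2) : BelowL P st (gen i) := by
  rw [← one_smul L2 (_root_.gen i), ← T_zero]
  exact T_smul_gen (by omega) (by omega)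

lemma add {x y : Fin n → L2} (hx : BelowL P st x) (hy : BelowL P st y) : BelowL P st (x + y) :=
  Submodule.add_mem _ hx hy

end BelowL

lemma d_comp_d : d ∘ₗ d = 0 :=
  linearMap_ext_gen fun i => by fin_cases i <;> simp [d, L2.add_self_eq_zero]

lemma iota_comp_d : iota ∘ₗ d = d ∘ₗ iota :=
  linearMap_ext_gen fun i => by fin_cases i <;> simp [d, iota, add_comm]

lemma homogL_iota_gen (i : Fin 5) : HomogL M (M i) (iota (gen i)) := by
  fin_cases i <;> simp only [iota, mkL_gen, Fin.reduceFinMk, Matrix.cons_val]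
  · exact (HomogL.gen rfl).add (HomogL.gen rfl)
  · exact HomogL.T_smul_gen (by simp [M])
  · exact HomogL.T_smul_gen (k := 1) (by simp [M])
  · exact HomogL.gen rfl
  · exact (HomogL.gen (i := 3) rfl).add (HomogL.gen rfl)

lemma belowL_iota_gen (i : Fin 5) : BelowL P ((P i).2, (P i).1) (iota (gen i)) := by
  fin_cases i <;> simp only [iota, mkL_gen, Fin.reduceFinMk, Matrix.cons_val]
  · refine (BelowL.gen ?_ ?_).add (BelowL.gen ?_ ?_) <;> simp [P]
  · refine BelowL.T_smul_gen ?_ ?_ <;> simp [P]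
  · refine BelowL.T_smul_gen (k := 1) ?_ ?_ <;> simp [P]
  · refine BelowL.gen ?_ ?_ <;> simp [P]
  · refine (BelowL.gen ?_ ?_).add (BelowL.gen ?_ ?_) <;> simp [P]

lemma sigma_eq_mkL : sigma = mkL ![gen 0 + gen 3, gen 1, gen 2, gen 3, gen 4] :=
  linearMap_ext_gen fun i => by fin_cases i <;> simp [sigma, Phi, Psi]

lemma iota_comp_iota : iota ∘ₗ iota = sigma := by
  rw [sigma_eq_mkL]
  refine linearMap_ext_gen fun i => ?_
  fin_cases i <;> simp [iota, add_left_comm, add_comm, L2.add_add_cancel_left, L2.add_self_eq_zero]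

lemma sigma_comp_sigma : sigma ∘ₗ sigma = LinearMap.id := by
  rw [sigma_eq_mkL]
  refine linearMap_ext_gen fun i => ?_
  fin_cases i <;> simp [add_left_comm, add_comm, L2.add_self_eq_zero]

lemma iota_comp_iota_comp_iota_comp_iota : iota ∘ₗ iota ∘ₗ iota ∘ₗ iota = LinearMap.id := by
  rw [← LinearMap.comp_assoc, ← LinearMap.comp_assoc, iota_comp_iota, LinearMap.comp_assoc,
    iota_comp_iota, sigma_comp_sigma]

theorem stmt_3 :
    -- CFK^∞(4_1) is a chain complex
    d ∘ₗ d = 0 ∧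
    -- ι is a chain map
    iota ∘ₗ d = d ∘ₗ iota ∧
    -- ι preserves the homological grading M
    (∀ (r : ℤ) (x : Fin 5 → L2), HomogL M r x → HomogL M r (iota x)) ∧
    -- ι is skew-filtered
    (∀ i : Fin 5, BelowL P ((P i).2, (P i).1) (iota (gen i))) ∧
    -- ι² = σ, the Sarkar map
    iota ∘ₗ iota = sigma ∧
    -- here σ(a) = a + e and σ fixes b, c, e, x
    sigma (gen 0) = gen 0 + gen 3 ∧ sigma (gen 1) = gen 1 ∧
    sigma (gen 2) = gen 2 ∧ sigma (gen 3) = gen 3 ∧ sigma (gen 4) = gen 4 ∧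
    -- in particular ι⁴ = Id
    iota ∘ₗ iota ∘ₗ iota ∘ₗ iota = LinearMap.id := by
  refine ⟨d_comp_d, iota_comp_d, fun r x hx => hx.map_of_gen iota homogL_iota_gen,
    belowL_iota_gen, iota_comp_iota, ?_, ?_, ?_, ?_, ?_, iota_comp_iota_comp_iota_comp_iota⟩ <;>
  simp [sigma_eq_mkL]
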